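/- If (β,α) ∈ Δ and Ω_{β,α} is a subshift of finite type, then α belongs to ℚ(β), the smallest subfield of ℝ containing β. Consequently, for each fixed β ∈ (1,2), the set {α ∈ (0,2−β) : Ω_{β,α} is a subshift of finite type} is countable. -/

import Mathlib

noncomputable section

/-- The upper intermediate β-transformation `T⁺_{β,α}` on `[0,1]`. -/
def Tpos (β α : ℝ) (x : ℝ) : ℝ :=
  if x = (1 - α) / β then 0 else Int.fract (β * x + α)

/-- The lower intermediate β-transformation `T⁻_{β,α}` on `[0,1]`. -/
def Tneg (β α : ℝ) (x : ℝ) : ℝ :=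
  if x = (1 - α) / β then 1 else Int.fract (β * x + α)

/-- The itinerary `τ⁺_{β,α}(x)`: index `n` (from 0) is the `(n+1)`-st entry;
entry is `false` (i.e. 0) iff the `n`-th iterate is `< c`. -/
def tauPos (β α x : ℝ) : ℕ → Bool :=
  fun n => if (Tpos β α)^[n] x < (1 - α) / β then false else true

/-- The itinerary `τ⁻_{β,α}(x)`: entry is `false` (i.e. 0) iff the iterate is `≤ c`. -/
def tauNeg (β α x : ℝ) : ℕ → Bool :=
  fun n => if (Tneg β α)^[n] x ≤ (1 - α) / β then false else true

/-- The kneading invariant `k₊` of `(β,α)`. -/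
def kPlus (β α : ℝ) : ℕ → Bool := tauPos β α ((1 - α) / β)

/-- The kneading invariant `k₋` of `(β,α)`. -/
def kMinus (β α : ℝ) : ℕ → Bool := tauNeg β α ((1 - α) / β)

/-- The kneading space `Ω_{β,α}`. -/
def OmegaSet (β α : ℝ) : Set (ℕ → Bool) :=
  (tauPos β α '' Set.Icc 0 1) ∪ (tauNeg β α '' Set.Icc 0 1)

/-- `Ω` is a subshift of finite type: there is a finite set of finite forbidden words
such that `Ω` is exactly the set of sequences avoiding them. -/
def IsSFT (Ω : Set (ℕ → Bool)) : Prop :=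
  ∃ F : Finset (List Bool),
    Ω = {ω | ∀ m n : ℕ, List.ofFn (fun i : Fin n => ω (m + i)) ∉ F}

/-- `T_{β,α}` has matching. -/
def HasMatching (β α : ℝ) : Prop :=
  ∃ n : ℕ, (Tpos β α)^[n] 0 = (Tneg β α)^[n] 1

/-- The matching time: the smallest `n` with `(T⁺)ⁿ(0) = (T⁻)ⁿ(1)`. -/
def matchingTime (β α : ℝ) : ℕ :=
  sInf {n : ℕ | (Tpos β α)^[n] 0 = (Tneg β α)^[n] 1}

/-- `T_{β,α}` and `T_{β,α'}` have the same matching: both have matching, with the same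
matching time `n`, and their kneading invariants agree in the first `n+1` entries. -/
def SameMatching (β α α' : ℝ) : Prop :=
  HasMatching β α ∧ HasMatching β α' ∧ matchingTime β α = matchingTime β α' ∧
    ∀ i ≤ matchingTime β α, kPlus β α i = kPlus β α' i ∧ kMinus β α i = kMinus β α' i

/-- The matching set `I(β,α)` (a subset of `(0, 2-β)`). -/
def matchInterval (β α : ℝ) : Set ℝ :=
  {α' | α' ∈ Set.Ioo (0 : ℝ) (2 - β) ∧ SameMatching β α α'}

/-- The parameter region `Δ`. -/
def DeltaSet : Set (ℝ × ℝ) :=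
  {p | p.1 ∈ Set.Ioo (1 : ℝ) 2 ∧ p.2 ∈ Set.Ioo (0 : ℝ) (2 - p.1)}

/-- A sequence in `{0,1}^ℕ` is periodic. -/
def IsPeriodicSeq (ω : ℕ → Bool) : Prop :=
  ∃ p : ℕ, 1 ≤ p ∧ ∀ n, ω (n + p) = ω n

/-- A sequence in `{0,1}^ℕ` is eventually periodic. -/
def IsEvPeriodicSeq (ω : ℕ → Bool) : Prop :=
  ∃ k : ℕ, IsPeriodicSeq (fun n => ω (n + k))

/-- Strict lexicographic order on `{0,1}^ℕ`: at the first index where they differ,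
`ω` has entry 0 and `ν` has entry 1. -/
def lexLt (ω ν : ℕ → Bool) : Prop :=
  ∃ n : ℕ, (∀ m < n, ω m = ν m) ∧ ω n = false ∧ ν n = true


/-!
Itineraries of an expanding map `x ↦ βx + α - d(x)` are lexicographically monotone, so
`τ⁺(1)` is the largest element of `Ω_{β,α}`. If the forbidden words of `Ω_{β,α}` are shorter
than `N` and `τ⁺(1)` has equal length-`N` windows at positions `a` and `b`, then splicing its
tail from `a` in at position `b` stays inside `Ω_{β,α}`; maximality, used in both directions,
makes the two tails equal, so `τ⁺(1)` is eventually periodic. Since the map multiplies distances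
by `β > 1`, itineraries determine points, hence `T^{p+m}(1) = T^m(1)` for some `p ≥ 1`. Both sides
are `α · ∑ βⁱ` plus an element of `ℚ(β)`, with different geometric sums, which puts `α` in `ℚ(β)`,
a countable field.
-/

open Set Function

def lexLe (ω ν : ℕ → Bool) : Prop := ω = ν ∨ lexLt ω ν

theorem lexLe_of_forall {ω ν : ℕ → Bool}
    (h : ∀ n, (∀ m < n, ω m = ν m) → ω n ≤ ν n) : lexLe ω ν := by
  classical
  by_cases heq : ω = ν
  · exact Or.inl heq
  have hne : ∃ n, ω n ≠ ν n := by
    by_contra! h'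
    exact heq (funext h')
  have hmin : ∀ m < Nat.find hne, ω m = ν m := fun m hm => not_not.mp (Nat.find_min hne hm)
  have hle := h _ hmin
  have hdiff := Nat.find_spec hne
  refine Or.inr ⟨Nat.find hne, hmin, ?_⟩
  revert hle hdiff
  cases ω (Nat.find hne) <;> cases ν (Nat.find hne) <;> decide

theorem lexLe_antisymm {ω ν : ℕ → Bool} (h₁ : lexLe ω ν) (h₂ : lexLe ν ω) : ω = ν := by
  rcases h₁ with h | ⟨n, hn, hωn, hνn⟩
  · exact h
  rcases h₂ with h | ⟨k, hk, hνk, hωk⟩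
  · exact h.symm
  rcases lt_trichotomy n k with h | rfl | h
  · simp [hk n h, hωn] at hνn
  · simp [hωn] at hωk
  · simp [hn k h, hνk] at hωk

theorem lexLe.shift {ω ν : ℕ → Bool} {b : ℕ} (h : lexLe ω ν) (hb : ∀ i < b, ω i = ν i) :
    lexLe (fun n => ω (n + b)) (fun n => ν (n + b)) := by
  rcases h with rfl | ⟨d, hd, hωd, hνd⟩
  · exact Or.inl rfl
  have hbd : b ≤ d := by
    by_contra! h
    simp [hb d h, hνd] at hωd
  refine Or.inr ⟨d - b, fun m hm => hd _ (by omega), ?_, ?_⟩ <;>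
    simpa only [Nat.sub_add_cancel hbd]

theorem isEvPeriodicSeq_of_shift_eq {μ : ℕ → Bool} {u v : ℕ} (huv : u < v)
    (h : (fun n => μ (n + u)) = fun n => μ (n + v)) : IsEvPeriodicSeq μ :=
  ⟨u, v - u, by omega, fun n => by
    simpa only [show n + (v - u) + u = n + v by omega] using (congrFun h n).symm⟩

section SubshiftOfFiniteType

variable {Ω : Set (ℕ → Bool)}

theorem splice_mem_of_forbidden_length_lt {F : Finset (List Bool)} {N : ℕ}
    (hF : Ω = {ω | ∀ m n : ℕ, List.ofFn (fun i : Fin n => ω (m + i)) ∉ F})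
    (hN : ∀ w ∈ F, w.length < N) {μ : ℕ → Bool} (hμ : μ ∈ Ω) {a b : ℕ}
    (hab : ∀ i < N, μ (a + i) = μ (b + i)) :
    (fun i => if i < b then μ i else μ (i - b + a)) ∈ Ω := by
  set ρ : ℕ → Bool := fun i => if i < b then μ i else μ (i - b + a)
  have hρ_head : ∀ i < b + N, ρ i = μ i := by
    intro i hi
    by_cases h : i < b
    · exact if_pos h
    · simp only [ρ, if_neg h, add_comm (i - b) a, hab (i - b) (by omega)]
      congr 1
      omega
  have hρ_tail : ∀ i, b ≤ i → ρ i = μ (i - b + a) := fun i hi => if_neg (by omega)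
  rw [hF] at hμ ⊢
  intro q l
  by_cases hql : q + l ≤ b + N
  · rw [show List.ofFn (fun i : Fin l => ρ (q + i)) = List.ofFn (fun i : Fin l => μ (q + i)) from
      congrArg _ (funext fun i => hρ_head _ (by omega))]
    exact hμ q l
  by_cases hbq : b ≤ q
  · rw [show List.ofFn (fun i : Fin l => ρ (q + i)) =
        List.ofFn (fun i : Fin l => μ (q - b + a + i)) from
      congrArg _ (funext fun i => by rw [hρ_tail _ (by omega)]; congr 1; omega)]
    exact hμ _ l
  · intro hw
    have hlen := hN _ hw
    rw [List.length_ofFn] at hlen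
    omega

theorem IsSFT.isEvPeriodicSeq_of_isGreatest (hΩ : IsSFT Ω) {μ : ℕ → Bool} (hμ : μ ∈ Ω)
    (hmax : ∀ ω ∈ Ω, lexLe ω μ) : IsEvPeriodicSeq μ := by
  obtain ⟨F, hF⟩ := hΩ
  set N := F.sup List.length + 1
  have hN : ∀ w ∈ F, w.length < N := fun w hw => Nat.lt_succ_of_le (Finset.le_sup hw)
  have hshift : ∀ a b, (∀ i < N, μ (a + i) = μ (b + i)) →
      lexLe (fun n => μ (n + a)) (fun n => μ (n + b)) := by
    intro a b hab
    have hsplice := splice_mem_of_forbidden_length_lt hF hN hμ hab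
    simpa using (hmax _ hsplice).shift (b := b) fun i hi => if_pos hi
  obtain ⟨u, v, huv, hwin⟩ :=
    Finite.exists_ne_map_eq_of_infinite fun q : ℕ => fun i : Fin N => μ (q + i)
  have hwin' : ∀ i < N, μ (u + i) = μ (v + i) := fun i hi => congrFun hwin ⟨i, hi⟩
  have htail := lexLe_antisymm (hshift u v hwin') (hshift v u fun i hi => (hwin' i hi).symm)
  rcases huv.lt_or_gt with h | h
  · exact isEvPeriodicSeq_of_shift_eq h htail
  · exact isEvPeriodicSeq_of_shift_eq h htail.symm

end SubshiftOfFiniteType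

def itinerary (T : ℝ → ℝ) (d : ℝ → Bool) (x : ℝ) : ℕ → Bool := fun n => d (T^[n] x)

theorem itinerary_iterate (T : ℝ → ℝ) (d : ℝ → Bool) (x : ℝ) (k : ℕ) :
    itinerary T d (T^[k] x) = fun n => itinerary T d x (n + k) := by
  funext n
  simp only [itinerary, ← iterate_add_apply]

structure IsDigitMap (β α : ℝ) (T : ℝ → ℝ) (d : ℝ → Bool) (s : Set ℝ) : Prop where
  mapsTo : MapsTo T s s
  apply_eq : ∀ x ∈ s, T x = β * x + α - cond (d x) 1 0

section DigitMap

variable {β α : ℝ} {s : Set ℝ} {T T₁ T₂ : ℝ → ℝ} {d d₁ d₂ : ℝ → Bool}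

theorem IsDigitMap.iterate_sub_iterate (h₁ : IsDigitMap β α T₁ d₁ s)
    (h₂ : IsDigitMap β α T₂ d₂ s) {x y : ℝ} (hx : x ∈ s) (hy : y ∈ s) {n : ℕ}
    (hagree : ∀ m < n, itinerary T₁ d₁ x m = itinerary T₂ d₂ y m) :
    T₂^[n] y - T₁^[n] x = β ^ n * (y - x) := by
  induction n with
  | zero => simp
  | succ n ih =>
    have hn : d₁ (T₁^[n] x) = d₂ (T₂^[n] y) := hagree n n.lt_succ_self
    have ih := ih fun m hm => hagree m (by omega)
    rw [iterate_succ_apply', iterate_succ_apply', h₁.apply_eq _ (h₁.mapsTo.iterate n hx),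
      h₂.apply_eq _ (h₂.mapsTo.iterate n hy), hn, pow_succ]
    linear_combination β * ih

theorem itinerary_lexLe_of_le (hβ : 0 ≤ β) (h₁ : IsDigitMap β α T₁ d₁ s)
    (h₂ : IsDigitMap β α T₂ d₂ s) (hd : ∀ z w, z ≤ w → d₁ z ≤ d₂ w)
    {x y : ℝ} (hx : x ∈ s) (hy : y ∈ s) (hxy : x ≤ y) :
    lexLe (itinerary T₁ d₁ x) (itinerary T₂ d₂ y) := by
  refine lexLe_of_forall fun n hagree => hd _ _ ?_
  have := h₁.iterate_sub_iterate h₂ hx hy hagree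
  nlinarith [mul_nonneg (pow_nonneg hβ n) (sub_nonneg.mpr hxy)]

theorem IsDigitMap.injOn_itinerary (hβ : 1 < β) (h : IsDigitMap β α T d s)
    (hs : Bornology.IsBounded s) : InjOn (itinerary T d) s := by
  intro x hx y hy hxy
  obtain ⟨C, hC⟩ := Metric.isBounded_iff.mp hs
  by_contra hne
  have hpos : 0 < |y - x| := abs_pos.mpr (sub_ne_zero.mpr (Ne.symm hne))
  obtain ⟨n, hn⟩ := pow_unbounded_of_one_lt (C / |y - x|) hβ
  have hbound := hC (h.mapsTo.iterate n hy) (h.mapsTo.iterate n hx)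
  rw [Real.dist_eq, h.iterate_sub_iterate h hx hy (fun m _ => congrFun hxy m), abs_mul,
    abs_of_pos (pow_pos (by linarith) n)] at hbound
  rw [div_lt_iff₀ hpos] at hn
  linarith

theorem IsDigitMap.iterate_sub_mem (h : IsDigitMap β α T d s) {K : Subfield ℝ} (hβK : β ∈ K)
    {x : ℝ} (hx : x ∈ s) (hxK : x ∈ K) (n : ℕ) :
    T^[n] x - α * ∑ i ∈ Finset.range n, β ^ i ∈ K := by
  induction n with
  | zero => simpa using hxK
  | succ n ih =>
    rw [iterate_succ_apply', h.apply_eq _ (h.mapsTo.iterate n hx), geom_sum_succ]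
    have hd : cond (d (T^[n] x)) (1 : ℝ) 0 ∈ K := by cases d (T^[n] x) <;> simp
    convert sub_mem (mul_mem hβK ih) hd using 1
    ring

theorem IsDigitMap.mem_of_iterate_eq (h : IsDigitMap β α T d s) (hβ : 0 < β) {K : Subfield ℝ}
    (hβK : β ∈ K) {x : ℝ} (hx : x ∈ s) (hxK : x ∈ K) {m p : ℕ} (hp : 1 ≤ p)
    (hper : T^[p + m] x = T^[m] x) : α ∈ K := by
  have hsum : ∑ i ∈ Finset.range (p + m), β ^ i - ∑ i ∈ Finset.range m, β ^ i =
      ∑ i ∈ Finset.Ico m (p + m), β ^ i := (Finset.sum_Ico_eq_sub _ (by omega)).symm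
  have hpos : 0 < ∑ i ∈ Finset.Ico m (p + m), β ^ i :=
    Finset.sum_pos (fun i _ => pow_pos hβ i) (Finset.nonempty_Ico.mpr (by omega))
  have hmul : α * ∑ i ∈ Finset.Ico m (p + m), β ^ i ∈ K := by
    convert sub_mem (h.iterate_sub_mem hβK hx hxK m) (h.iterate_sub_mem hβK hx hxK (p + m))
      using 1
    rw [hper, ← hsum]
    ring
  have hsumK : ∑ i ∈ Finset.Ico m (p + m), β ^ i ∈ K := sum_mem fun i _ => pow_mem hβK i
  simpa [hpos.ne'] using K.div_mem hmul hsumK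

end DigitMap

section IntermediateBetaTransformation

variable {β α : ℝ}

-- Chosen so that `tauPos β α = itinerary (Tpos β α) (digitPos β α)` and
-- `tauNeg β α = itinerary (Tneg β α) (digitNeg β α)` hold definitionally.
def digitPos (β α z : ℝ) : Bool := if z < (1 - α) / β then false else true

def digitNeg (β α z : ℝ) : Bool := if z ≤ (1 - α) / β then false else true

theorem digitPos_mono : Monotone (digitPos β α) := by
  intro z w hzw
  simp only [digitPos]
  split_ifs <;> simp_all
  linarith

theorem digitNeg_le_digitPos (z : ℝ) : digitNeg β α z ≤ digitPos β α z := by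
  simp only [digitNeg, digitPos]
  split_ifs <;> simp_all
  linarith

theorem digitNeg_eq_digitPos {z : ℝ} (hz : z ≠ (1 - α) / β) :
    digitNeg β α z = digitPos β α z := by
  simp only [digitNeg, digitPos, le_iff_lt_or_eq, hz, or_false]

theorem Tpos_mem_Icc (x : ℝ) : Tpos β α x ∈ Icc 0 1 := by
  unfold Tpos
  split_ifs
  · exact left_mem_Icc.mpr zero_le_one
  · exact ⟨Int.fract_nonneg _, (Int.fract_lt_one _).le⟩

theorem Tneg_mem_Icc (x : ℝ) : Tneg β α x ∈ Icc 0 1 := by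
  unfold Tneg
  split_ifs
  · exact right_mem_Icc.mpr zero_le_one
  · exact ⟨Int.fract_nonneg _, (Int.fract_lt_one _).le⟩

variable (hβ : 0 < β) (hα₀ : 0 ≤ α) (hα₂ : α < 2 - β)
include hβ hα₀ hα₂

theorem fract_mul_add_eq {x : ℝ} (hx : x ∈ Icc 0 1) (hxc : x ≠ (1 - α) / β) :
    Int.fract (β * x + α) = β * x + α - cond (digitPos β α x) 1 0 := by
  rw [Int.fract_eq_iff]
  rcases hxc.lt_or_gt with hlt | hgt
  · have : β * x < 1 - α := by rwa [lt_div_iff₀' hβ] at hlt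
    simp only [digitPos, if_pos hlt, cond_false, sub_zero]
    exact ⟨by nlinarith [hx.1], by linarith, 0, by simp⟩
  · have : 1 - α < β * x := by rwa [div_lt_iff₀' hβ] at hgt
    simp only [digitPos, if_neg hgt.not_gt, cond_true]
    exact ⟨by linarith, by nlinarith [hx.2], 1, by simp⟩

theorem isDigitMap_Tpos : IsDigitMap β α (Tpos β α) (digitPos β α) (Icc 0 1) := by
  refine ⟨fun x _ => Tpos_mem_Icc x, fun x hx => ?_⟩
  unfold Tpos
  split_ifs with hxc
  · simp only [digitPos, hxc, lt_irrefl, if_false, cond_true]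
    field_simp
    ring
  · exact fract_mul_add_eq hβ hα₀ hα₂ hx hxc

theorem isDigitMap_Tneg : IsDigitMap β α (Tneg β α) (digitNeg β α) (Icc 0 1) := by
  refine ⟨fun x _ => Tneg_mem_Icc x, fun x hx => ?_⟩
  unfold Tneg
  split_ifs with hxc
  · simp only [digitNeg, hxc, le_refl, if_true, cond_false]
    field_simp
    ring
  · rw [digitNeg_eq_digitPos hxc]
    exact fract_mul_add_eq hβ hα₀ hα₂ hx hxc

theorem lexLe_tauPos_one {ω : ℕ → Bool} (hω : ω ∈ OmegaSet β α) : lexLe ω (tauPos β α 1) := by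
  have h1 : (1 : ℝ) ∈ Icc 0 1 := right_mem_Icc.mpr zero_le_one
  have hpos := isDigitMap_Tpos hβ hα₀ hα₂
  rcases hω with ⟨x, hx, rfl⟩ | ⟨x, hx, rfl⟩
  · exact itinerary_lexLe_of_le hβ.le hpos hpos (fun _ _ h => digitPos_mono h) hx h1 hx.2
  · exact itinerary_lexLe_of_le hβ.le (isDigitMap_Tneg hβ hα₀ hα₂) hpos
      (fun z _ h => (digitNeg_le_digitPos z).trans (digitPos_mono h)) hx h1 hx.2

end IntermediateBetaTransformation

theorem mem_closure_singleton_of_isSFT {β α : ℝ} (hβ : 1 < β) (hα₀ : 0 ≤ α) (hα₂ : α < 2 - β)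
    (hsft : IsSFT (OmegaSet β α)) : α ∈ Subfield.closure {β} := by
  have hβ₀ : 0 < β := by linarith
  have h1 : (1 : ℝ) ∈ Icc 0 1 := right_mem_Icc.mpr zero_le_one
  have hT := isDigitMap_Tpos hβ₀ hα₀ hα₂
  obtain ⟨m, p, hp, hper⟩ := hsft.isEvPeriodicSeq_of_isGreatest (Or.inl ⟨1, h1, rfl⟩)
    fun ω hω => lexLe_tauPos_one hβ₀ hα₀ hα₂ hω
  have horbit : (Tpos β α)^[p + m] 1 = (Tpos β α)^[m] 1 := by
    refine hT.injOn_itinerary hβ (Metric.isBounded_Icc 0 1) (hT.mapsTo.iterate _ h1)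
      (hT.mapsTo.iterate _ h1) ?_
    simp only [itinerary_iterate, ← add_assoc]
    exact funext hper
  exact hT.mem_of_iterate_eq hβ₀ (Subfield.subset_closure rfl) h1 (one_mem _) hp horbit

theorem countable_subfieldClosure_singleton (β : ℝ) :
    (Subfield.closure ({β} : Set ℝ) : Set ℝ).Countable := by
  have := Subfield.cardinalMk_closure_le_max ({β} : Set ℝ)
  rw [Cardinal.mk_singleton, max_eq_right Cardinal.one_le_aleph0] at this
  exact Set.countable_coe_iff.mp (Cardinal.mk_le_aleph0_iff.mp this)

theorem sft_alpha_in_field_and_countable :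
    (∀ β α : ℝ, β ∈ Set.Ioo (1 : ℝ) 2 → α ∈ Set.Ioo (0 : ℝ) (2 - β) →
      IsSFT (OmegaSet β α) → α ∈ Subfield.closure {β}) ∧
    (∀ β : ℝ, β ∈ Set.Ioo (1 : ℝ) 2 →
      Set.Countable {α : ℝ | α ∈ Set.Ioo (0 : ℝ) (2 - β) ∧ IsSFT (OmegaSet β α)}) := by
  refine ⟨fun β α hβ hα hsft => mem_closure_singleton_of_isSFT hβ.1 hα.1.le hα.2 hsft,
    fun β hβ => ?_⟩
  exact (countable_subfieldClosure_singleton β).mono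
    fun α ⟨hα, hsft⟩ => mem_closure_singleton_of_isSFT hβ.1 hα.1.le hα.2 hsft
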